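/- arXiv:2602.18946 — 7 statements merged into one kernel-verified Lean document; each statement's English description precedes it below -/
import Mathlib

section
/- For the empirical logistic loss L(w) = (1/n)∑_{i=1}^n ln(1+exp(-y_i⟨x_i,w⟩)) with ‖x_i‖ ≤ 1 for all i, the gradient satisfies the self-bounding property ‖∇L(w)‖ ≤ min{1, L(w)} for every w ∈ ℝ^d. -/
/-!
Since `‖y x‖ ≤ 1`, each summand of the gradient has norm at most its weight
`1 / (1 + exp (y ⟪x, w⟫))`. That weight is at most `1`, and by `1 - 1/u ≤ log u` at
`u = 1 + exp (-y ⟪x, w⟫)` it is also at most the sample's loss; averaging over the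
samples gives both bounds.
-/

open scoped RealInnerProductSpace

lemma one_div_one_add_exp_le_one (t : ℝ) : 1 / (1 + Real.exp t) ≤ 1 := by
  rw [div_le_one (by positivity)]
  linarith [Real.exp_pos t]

lemma one_div_one_add_exp_le_log_one_add_exp_neg (t : ℝ) :
    1 / (1 + Real.exp t) ≤ Real.log (1 + Real.exp (-t)) := by
  have hlog := Real.one_sub_inv_le_log_of_pos (by positivity : (0 : ℝ) < 1 + Real.exp (-t))
  have hσ : 1 - (1 + Real.exp (-t))⁻¹ = 1 / (1 + Real.exp t) := by
    rw [Real.exp_neg]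
    field_simp
    ring
  rwa [hσ] at hlog

lemma norm_sum_smul_le_sum {𝕜 E ι : Type*} [NormedField 𝕜] [SeminormedAddCommGroup E]
    [NormedSpace 𝕜 E] (s : Finset ι) (a : ι → 𝕜) (b : ι → ℝ) (v : ι → E)
    (hab : ∀ i ∈ s, ‖a i‖ ≤ b i) (hv : ∀ i ∈ s, ‖v i‖ ≤ 1) :
    ‖∑ i ∈ s, a i • v i‖ ≤ ∑ i ∈ s, b i :=
  calc ‖∑ i ∈ s, a i • v i‖ ≤ ∑ i ∈ s, ‖a i • v i‖ := norm_sum_le _ _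
    _ ≤ ∑ i ∈ s, b i := Finset.sum_le_sum fun i hi => by
      rw [norm_smul]
      exact (mul_le_of_le_one_right (norm_nonneg _) (hv i hi)).trans (hab i hi)

theorem stmt_2_general {d n : ℕ} (x : Fin n → EuclideanSpace ℝ (Fin d))
    (y : Fin n → ℝ) (hy : ∀ i, y i = 1 ∨ y i = -1)
    (hx : ∀ i, ‖x i‖ ≤ 1) (w : EuclideanSpace ℝ (Fin d)) :
    ‖(1 / (n : ℝ)) • ∑ i, (1 / (1 + Real.exp (y i * ⟪x i, w⟫))) • (-(y i) • x i)‖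
      ≤ min 1 ((1 / (n : ℝ)) * ∑ i, Real.log (1 + Real.exp (-(y i * ⟪x i, w⟫)))) := by
  have hv : ∀ i, ‖-(y i) • x i‖ ≤ 1 := fun i => by
    rcases hy i with h | h <;> simp [h, hx i]
  have hgrad : ∀ b : Fin n → ℝ, (∀ i, 1 / (1 + Real.exp (y i * ⟪x i, w⟫)) ≤ b i) →
      ‖(1 / (n : ℝ)) • ∑ i, (1 / (1 + Real.exp (y i * ⟪x i, w⟫))) • (-(y i) • x i)‖
        ≤ (1 / (n : ℝ)) * ∑ i, b i := fun b hb => by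
    rw [norm_smul, Real.norm_of_nonneg (by positivity)]
    gcongr
    refine norm_sum_smul_le_sum _ _ _ _ (fun i _ => ?_) (fun i _ => hv i)
    rw [Real.norm_of_nonneg (by positivity)]
    exact hb i
  refine le_min ?_ (hgrad _ fun i => one_div_one_add_exp_le_log_one_add_exp_neg _)
  calc _ ≤ (1 / (n : ℝ)) * ∑ _i : Fin n, (1 : ℝ) := hgrad _ fun i => one_div_one_add_exp_le_one _
    _ ≤ 1 := by
      simp only [Finset.sum_const, Finset.card_univ, Fintype.card_fin, nsmul_eq_mul, mul_one,
        one_div]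
      exact inv_mul_le_one_of_le₀ le_rfl (Nat.cast_nonneg n)

/-- Self-bounding gradient property of the empirical logistic loss with
normalized features: `‖∇L(w)‖ ≤ min {1, L(w)}`, where the gradient is
`∇L(w) = (1/n) ∑ i, (1/(1+exp(y_i⟨x_i,w⟩))) • (-(y_i) • x_i)`. -/
theorem stmt_2 {d n : ℕ} (hn : 1 ≤ n) (x : Fin n → EuclideanSpace ℝ (Fin d))
    (y : Fin n → ℝ) (hy : ∀ i, y i = 1 ∨ y i = -1)
    (hx : ∀ i, ‖x i‖ ≤ 1) (w : EuclideanSpace ℝ (Fin d)) :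
    ‖(1 / (n : ℝ)) • ∑ i, (1 / (1 + Real.exp (y i * ⟪x i, w⟫))) • (-(y i) • x i)‖
      ≤ min 1 ((1 / (n : ℝ)) * ∑ i, Real.log (1 + Real.exp (-(y i * ⟪x i, w⟫)))) :=
  stmt_2_general x y hy hx w
end

section
/- For the empirical logistic loss with normalized features, the largest eigenvalue of the Hessian H(w) is bounded by min{1/4, L(w)} for every w; in particular L is (1/4)-smooth. -/
/-!
Writing `σ_i = sigmoid (-y_i⟨x_i, w⟩)`, the quadratic form of the Hessian is
`(1/n) ∑ σ_i (1 - σ_i) ⟨x_i, v⟩²`, and `⟨x_i, v⟩² ≤ ‖v‖²` by Cauchy–Schwarz since `‖x_i‖ ≤ 1`.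
So it suffices to bound each weight: `p (1 - p) ≤ 1/4` for every real `p`, and
`σ (1 - σ) ≤ σ(t) = 1 - 1/u ≤ log u` for `u = 1 + eᵗ`.
-/

open Real Matrix Finset

lemma mul_one_sub_le_one_div_four (p : ℝ) : p * (1 - p) ≤ 1 / 4 := by
  nlinarith [sq_nonneg (p - 1 / 2)]

lemma one_div_one_add_exp (t : ℝ) : 1 / (1 + exp t) = sigmoid (-t) := by
  rw [sigmoid_def, neg_neg, one_div]

lemma sigmoid_mul_one_sub_nonneg (t : ℝ) : 0 ≤ sigmoid t * (1 - sigmoid t) :=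
  mul_nonneg (sigmoid_nonneg t) (sub_nonneg.2 (sigmoid_le_one t))

lemma sigmoid_le_log_one_add_exp (t : ℝ) : sigmoid t ≤ log (1 + exp t) := by
  calc sigmoid t = 1 - (1 + exp t)⁻¹ := by
        simpa only [neg_neg, sigmoid_def] using sigmoid_neg (-t)
    _ ≤ log (1 + exp t) := one_sub_inv_le_log_of_pos (by positivity)

lemma sigmoid_mul_one_sub_le_log_one_add_exp (t : ℝ) :
    sigmoid t * (1 - sigmoid t) ≤ log (1 + exp t) :=
  calc sigmoid t * (1 - sigmoid t) ≤ sigmoid t :=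
        mul_le_of_le_one_right (sigmoid_nonneg t) (sub_le_self _ (sigmoid_nonneg t))
    _ ≤ log (1 + exp t) := sigmoid_le_log_one_add_exp t

section QuadraticForm

variable {ι n R : Type*} [Fintype ι] [Fintype n]

lemma dotProduct_sum_smul_vecMulVec_mulVec [CommRing R] (a : ι → R) (x : ι → n → R) (v : n → R) :
    v ⬝ᵥ (∑ i, a i • vecMulVec (x i) (x i)) *ᵥ v = ∑ i, a i * (x i ⬝ᵥ v) ^ 2 := by
  simp only [sum_mulVec, smul_mulVec, vecMulVec_mulVec, op_smul_eq_smul, dotProduct_sum,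
    dotProduct_smul, smul_eq_mul, dotProduct_comm v (x _)]
  exact Finset.sum_congr rfl fun i _ => by ring

lemma sq_dotProduct_le (u v : n → ℝ) : (u ⬝ᵥ v) ^ 2 ≤ (u ⬝ᵥ u) * (v ⬝ᵥ v) := by
  simpa only [dotProduct, sq] using Finset.sum_mul_sq_le_sq_mul_sq univ u v

lemma sum_mul_sq_dotProduct_le {a m : ι → ℝ} {x : ι → n → ℝ} (ha : ∀ i, 0 ≤ a i)
    (ham : ∀ i, a i ≤ m i) (hx : ∀ i, x i ⬝ᵥ x i ≤ 1) (v : n → ℝ) :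
    ∑ i, a i * (x i ⬝ᵥ v) ^ 2 ≤ (∑ i, m i) * (v ⬝ᵥ v) := by
  have hv : 0 ≤ v ⬝ᵥ v := by simpa using dotProduct_self_star_nonneg v
  rw [Finset.sum_mul]
  refine Finset.sum_le_sum fun i _ => ?_
  have hxv : (x i ⬝ᵥ v) ^ 2 ≤ v ⬝ᵥ v :=
    (sq_dotProduct_le _ _).trans (mul_le_of_le_one_left hv (hx i))
  exact (mul_le_mul_of_nonneg_left hxv (ha i)).trans (mul_le_mul_of_nonneg_right (ham i) hv)

end QuadraticForm

theorem stmt_4_general {d n : ℕ} (x : Fin n → Fin d → ℝ)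
    (y : Fin n → ℝ)
    (hx : ∀ i, ∑ j, (x i j) ^ 2 ≤ 1) (w : Fin d → ℝ) :
    ∀ v : Fin d → ℝ,
      v ⬝ᵥ ((1 / (n : ℝ)) •
          ∑ i, ((1 / (1 + Real.exp (y i * (x i ⬝ᵥ w)))) *
              (1 - 1 / (1 + Real.exp (y i * (x i ⬝ᵥ w))))) •
            Matrix.vecMulVec (x i) (x i)).mulVec v
        ≤ min (1 / 4)
            ((1 / (n : ℝ)) * ∑ i, Real.log (1 + Real.exp (-(y i * (x i ⬝ᵥ w)))))
          * (v ⬝ᵥ v) := by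
  intro v
  have hx' : ∀ i, x i ⬝ᵥ x i ≤ 1 := fun i => by simpa only [dotProduct, sq] using hx i
  have hv : 0 ≤ v ⬝ᵥ v := by simpa using dotProduct_self_star_nonneg v
  simp only [one_div_one_add_exp, smul_mulVec, dotProduct_smul,
    dotProduct_sum_smul_vecMulVec_mulVec, smul_eq_mul]
  rw [min_mul_of_nonneg _ _ hv, le_min_iff, mul_assoc]
  constructor
  · calc (1 / (n : ℝ)) * _ ≤ 1 / n * ((∑ _ : Fin n, (1 / 4 : ℝ)) * (v ⬝ᵥ v)) := by
          gcongr
          exact sum_mul_sq_dotProduct_le (fun _ => sigmoid_mul_one_sub_nonneg _)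
            (fun _ => mul_one_sub_le_one_div_four _) hx' v
      _ = (n / n) * (1 / 4) * (v ⬝ᵥ v) := by
          simp only [sum_const, card_univ, Fintype.card_fin, nsmul_eq_mul]
          ring
      _ ≤ 1 * (1 / 4) * (v ⬝ᵥ v) := by gcongr; exact div_self_le_one _
      _ = 1 / 4 * (v ⬝ᵥ v) := by rw [one_mul]
  · gcongr
    exact sum_mul_sq_dotProduct_le (fun _ => sigmoid_mul_one_sub_nonneg _)
      (fun _ => sigmoid_mul_one_sub_le_log_one_add_exp _) hx' v

/-- Hessian bound for the empirical logistic loss with normalized features: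
the quadratic form of `H(w) = (1/n) ∑ i, σ_i (1-σ_i) x_i x_iᵀ`
(with `σ_i = 1/(1+exp(y_i⟨x_i,w⟩))`) is bounded by `min {1/4, L(w)}·‖v‖²`
for every direction `v`, i.e. `λ_max(H(w)) ≤ min {1/4, L(w)}`;
in particular `L` is `(1/4)`-smooth. -/
theorem stmt_4 {d n : ℕ} (hn : 1 ≤ n) (x : Fin n → Fin d → ℝ)
    (y : Fin n → ℝ) (hy : ∀ i, y i = 1 ∨ y i = -1)
    (hx : ∀ i, ∑ j, (x i j) ^ 2 ≤ 1) (w : Fin d → ℝ) :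
    ∀ v : Fin d → ℝ,
      v ⬝ᵥ ((1 / (n : ℝ)) •
          ∑ i, ((1 / (1 + Real.exp (y i * (x i ⬝ᵥ w)))) *
              (1 - 1 / (1 + Real.exp (y i * (x i ⬝ᵥ w))))) •
            Matrix.vecMulVec (x i) (x i)).mulVec v
        ≤ min (1 / 4)
            ((1 / (n : ℝ)) * ∑ i, Real.log (1 + Real.exp (-(y i * (x i ⬝ᵥ w)))))
          * (v ⬝ᵥ v) :=
  stmt_4_general x y hx w
end

section
/- Let (S_t)_{t≥s} satisfy S_t = S_{t-1}·(1 + γ²/(2·ln²(S_{t-1}))) for t ≥ s+1 with S_s > 1 and γ > 0. Set C₁ = 1 + γ²/(2 ln²(S_s)). Then for all t ≥ s, ln³(S_t) ≥ ln³(S_s) + (3γ²/(2C₁))·(t - s). -/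
/-!
Each step multiplies `S` by `1 + x` with `x = γ²/(2 ln² S) ≥ 0`, so `ln S` grows by
`ln(1 + x) ≥ x/(1 + x)`. Cubing, `ln³` grows by at least `3 ln² S · x/(1 + x) = 3γ²/(2(1 + x))`,
and since `S` is increasing, `x` never exceeds its initial value `C₁ - 1`: every step raises
`ln³ S` by at least `3γ²/(2C₁)`.
-/

open Real

theorem pow_three_add_mul_le_add_pow_three {R : Type*} [CommRing R] [LinearOrder R]
    [IsStrictOrderedRing R] {a d : R} (ha : 0 ≤ a) (hd : 0 ≤ d) :
    a ^ 3 + 3 * a ^ 2 * d ≤ (a + d) ^ 3 := by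
  nlinarith [mul_nonneg (sq_nonneg d) (add_nonneg (mul_nonneg zero_le_three ha) hd)]

theorem Real.div_one_add_le_log_one_add {x : ℝ} (hx : 0 ≤ x) : x / (1 + x) ≤ log (1 + x) := by
  have h := one_sub_inv_le_log_of_pos (show 0 < 1 + x by linarith)
  have hsub : 1 - (1 + x)⁻¹ = x / (1 + x) := by field_simp; ring
  rwa [hsub] at h

theorem log_pow_three_add_le_log_mul_pow_three {y c : ℝ} (hy : 1 < y) (hc : 0 ≤ c) :
    log y ^ 3 + 3 * c / (1 + c / log y ^ 2) ≤ log (y * (1 + c / log y ^ 2)) ^ 3 := by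
  set ℓ := log y
  set x := c / ℓ ^ 2
  have hℓ : 0 < ℓ := log_pos hy
  have hx : 0 ≤ x := by positivity
  have hlog : log (y * (1 + x)) = ℓ + log (1 + x) := log_mul (by positivity) (by positivity)
  have hgain : 3 * c / (1 + x) = 3 * ℓ ^ 2 * (x / (1 + x)) := by
    simp only [x]
    field_simp
  calc ℓ ^ 3 + 3 * c / (1 + x)
      = ℓ ^ 3 + 3 * ℓ ^ 2 * (x / (1 + x)) := by rw [hgain]
    _ ≤ ℓ ^ 3 + 3 * ℓ ^ 2 * log (1 + x) := by gcongr; exact div_one_add_le_log_one_add hx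
    _ ≤ (ℓ + log (1 + x)) ^ 3 :=
        pow_three_add_mul_le_add_pow_three hℓ.le (log_nonneg (by linarith))
    _ = log (y * (1 + x)) ^ 3 := by rw [hlog]

theorem le_of_eq_mul_one_add {S x : ℕ → ℝ} {s : ℕ} (hSs : 0 ≤ S s) (hx : ∀ t, s ≤ t → 0 ≤ x t)
    (hrec : ∀ t, s ≤ t → S (t + 1) = S t * (1 + x t)) : ∀ t, s ≤ t → S s ≤ S t := by
  intro t ht
  induction t, ht using Nat.le_induction with
  | base => exact le_rfl
  | succ n hn ih =>
    rw [hrec n hn]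
    exact ih.trans (le_mul_of_one_le_right (hSs.trans ih) (by linarith [hx n hn]))

theorem add_mul_sub_le_of_add_le_succ {u : ℕ → ℝ} {s : ℕ} {K : ℝ}
    (hstep : ∀ n, s ≤ n → u n + K ≤ u (n + 1)) : ∀ t, s ≤ t → u s + K * ((t : ℝ) - s) ≤ u t := by
  intro t ht
  induction t, ht using Nat.le_induction with
  | base => simp
  | succ n hn ih =>
    push_cast
    linarith [hstep n hn]

theorem stmt_7_general (S : ℕ → ℝ) (s : ℕ) (γ : ℝ) (hSs : 1 < S s)
    (hrec : ∀ t, s ≤ t → S (t + 1) = S t * (1 + γ ^ 2 / (2 * (Real.log (S t)) ^ 2))) :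
    ∀ t, s ≤ t →
      (Real.log (S s)) ^ 3 +
          (3 * γ ^ 2 / (2 * (1 + γ ^ 2 / (2 * (Real.log (S s)) ^ 2)))) * ((t : ℝ) - s)
        ≤ (Real.log (S t)) ^ 3 := by
  set c := γ ^ 2 / 2
  have hc : 0 ≤ c := by positivity
  have hrec' : ∀ t, s ≤ t → S (t + 1) = S t * (1 + c / log (S t) ^ 2) := fun t ht ↦ by
    rw [hrec t ht, div_div]
  have hmono := le_of_eq_mul_one_add (by linarith) (fun t _ ↦ by positivity) hrec'
  have hconst : 3 * γ ^ 2 / (2 * (1 + γ ^ 2 / (2 * log (S s) ^ 2)))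
      = 3 * c / (1 + c / log (S s) ^ 2) := by
    simp only [c]
    field_simp
  rw [hconst]
  refine add_mul_sub_le_of_add_le_succ (u := fun t ↦ log (S t) ^ 3) fun n hn ↦ ?_
  have hSn : 1 < S n := hSs.trans_le (hmono n hn)
  have hlog : log (S s) ≤ log (S n) := log_le_log (by linarith) (hmono n hn)
  calc log (S n) ^ 3 + 3 * c / (1 + c / log (S s) ^ 2)
      ≤ log (S n) ^ 3 + 3 * c / (1 + c / log (S n) ^ 2) := by
        have := log_pos hSs
        gcongr
    _ ≤ log (S (n + 1)) ^ 3 := by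
        rw [hrec' n hn]
        exact log_pow_three_add_le_log_mul_pow_three hSn hc

/-- Lower bound for the recursion `S_{t+1} = S_t (1 + γ²/(2 ln² S_t))` with `S_s > 1`:
for all `t ≥ s`, `ln³(S_t) ≥ ln³(S_s) + (3γ²/(2C₁)) (t - s)`,
where `C₁ = 1 + γ²/(2 ln²(S_s))`. -/
theorem stmt_7 (S : ℕ → ℝ) (s : ℕ) (γ : ℝ) (hγ : 0 < γ) (hSs : 1 < S s)
    (hrec : ∀ t, s ≤ t → S (t + 1) = S t * (1 + γ ^ 2 / (2 * (Real.log (S t)) ^ 2))) :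
    ∀ t, s ≤ t →
      (Real.log (S s)) ^ 3 +
          (3 * γ ^ 2 / (2 * (1 + γ ^ 2 / (2 * (Real.log (S s)) ^ 2)))) * ((t : ℝ) - s)
        ≤ (Real.log (S t)) ^ 3 :=
  stmt_7_general S s γ hSs hrec
end

section
/- Let (S_t)_{t≥s} satisfy S_t = S_{t-1}·(1 + γ²/(2·ln²(S_{t-1}))) for t ≥ s+1 with S_s > 1 and γ > 0. Then for all t ≥ s, ln³(S_t) ≤ ln³(S_s) + C₂·(t - s), where C₂ = 3γ²/2 + 3γ⁴/(4 ln³(S_s)) + γ⁶/(8 ln⁶(S_s)). -/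
/-! Taking logarithms, `x_t := ln S_t` satisfies `x_{t+1} ≤ x_t + γ²/(2 x_t²)` since `ln (1 + ε) ≤ ε`.
The sequence `x_t` is nondecreasing, so `x_t ≥ x_s > 0`, and expanding the cube gives
`x_{t+1}³ ≤ x_t³ + 3γ²/2 + 3γ⁴/(4 x_t³) + γ⁶/(8 x_t⁶) ≤ x_t³ + C₂`; summing these increments proves
the bound. -/

open Real

lemma Real.log_mul_one_add_le {x ε : ℝ} (hx : 0 < x) (hε : 0 ≤ ε) :
    log (x * (1 + ε)) ≤ log x + ε := by
  rw [log_mul hx.ne' (by positivity)]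
  linarith [log_le_sub_one_of_pos (show 0 < 1 + ε by positivity)]

lemma add_div_two_mul_sq_pow_three_le {x L : ℝ} (γ : ℝ) (hL : 0 < L) (hLx : L ≤ x) :
    (x + γ ^ 2 / (2 * x ^ 2)) ^ 3 ≤
      x ^ 3 + (3 * γ ^ 2 / 2 + 3 * γ ^ 4 / (4 * L ^ 3) + γ ^ 6 / (8 * L ^ 6)) := by
  have hx : 0 < x := hL.trans_le hLx
  have hexpand : (x + γ ^ 2 / (2 * x ^ 2)) ^ 3 =
      x ^ 3 + (3 * γ ^ 2 / 2 + 3 * γ ^ 4 / (4 * x ^ 3) + γ ^ 6 / (8 * x ^ 6)) := by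
    field_simp
    ring
  rw [hexpand]
  gcongr

lemma le_add_mul_sub_of_succ_le_add {a : ℕ → ℝ} {C : ℝ} {s : ℕ}
    (h : ∀ t, s ≤ t → a (t + 1) ≤ a t + C) : ∀ t, s ≤ t → a t ≤ a s + C * ((t : ℝ) - s) := by
  intro t ht
  induction t, ht using Nat.le_induction with
  | base => simp
  | succ n hn ih =>
    push_cast
    linarith [h n hn]

theorem stmt_8_general (S : ℕ → ℝ) (s : ℕ) (γ : ℝ) (hSs : 1 < S s)
    (hrec : ∀ t, s ≤ t → S (t + 1) = S t * (1 + γ ^ 2 / (2 * (Real.log (S t)) ^ 2))) :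
    ∀ t, s ≤ t →
      (Real.log (S t)) ^ 3
        ≤ (Real.log (S s)) ^ 3 +
            (3 * γ ^ 2 / 2 + 3 * γ ^ 4 / (4 * (Real.log (S s)) ^ 3)
              + γ ^ 6 / (8 * (Real.log (S s)) ^ 6)) * ((t : ℝ) - s) := by
  have hmono : ∀ t, s ≤ t → S s ≤ S t := by
    intro t ht
    induction t, ht using Nat.le_induction with
    | base => exact le_rfl
    | succ n hn ih =>
      rw [hrec n hn]
      have hε : 0 ≤ γ ^ 2 / (2 * log (S n) ^ 2) := by positivity
      nlinarith
  refine le_add_mul_sub_of_succ_le_add fun t ht => ?_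
  have hSt : 1 < S t := hSs.trans_le (hmono t ht)
  have hLx : log (S s) ≤ log (S t) := log_le_log (by linarith) (hmono t ht)
  have hlog_succ : log (S (t + 1)) ≤ log (S t) + γ ^ 2 / (2 * log (S t) ^ 2) := by
    rw [hrec t ht]
    exact log_mul_one_add_le (by linarith) (by positivity)
  have hpos : 0 < log (S (t + 1)) := log_pos (hSs.trans_le (hmono (t + 1) (by omega)))
  calc log (S (t + 1)) ^ 3 ≤ (log (S t) + γ ^ 2 / (2 * log (S t) ^ 2)) ^ 3 := by gcongr
    _ ≤ _ := add_div_two_mul_sq_pow_three_le γ (log_pos hSs) hLx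

/-- Upper bound for the recursion `S_{t+1} = S_t (1 + γ²/(2 ln² S_t))` with `S_s > 1`:
for all `t ≥ s`, `ln³(S_t) ≤ ln³(S_s) + C₂ (t - s)`, where
`C₂ = 3γ²/2 + 3γ⁴/(4 ln³ S_s) + γ⁶/(8 ln⁶ S_s)`. -/
theorem stmt_8 (S : ℕ → ℝ) (s : ℕ) (γ : ℝ) (hγ : 0 < γ) (hSs : 1 < S s)
    (hrec : ∀ t, s ≤ t → S (t + 1) = S t * (1 + γ ^ 2 / (2 * (Real.log (S t)) ^ 2))) :
    ∀ t, s ≤ t →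
      (Real.log (S t)) ^ 3
        ≤ (Real.log (S s)) ^ 3 +
            (3 * γ ^ 2 / 2 + 3 * γ ^ 4 / (4 * (Real.log (S s)) ^ 3)
              + γ ^ 6 / (8 * (Real.log (S s)) ^ 6)) * ((t : ℝ) - s) :=
  stmt_8_general S s γ hSs hrec
end

section
/- Consider SGD on the logistic loss with step size η_t = min{1/ε, 1/L_{i_t}(w_t)}, where L_i(w) = ln(1+exp(-y_i⟨x_i,w⟩)). For any comparator u ∈ ℝ^d, the iterates satisfy the pathwise inequality ‖w_{t+1} − u‖² ≤ ‖w_t − u‖² − η_t·L_{i_t}(w_t) + 2·η_t·L_{i_t}(u). -/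
/-!
Write `ℓ t = log (1 + exp (-t))`, so that `L v = ℓ (y ⟪x, v⟫)` and `g = ℓ'(y ⟪x, w⟫) y • x`.
Expanding the square, `‖w' - u‖² = ‖w - u‖² - 2η ⟪g, w - u⟫ + η² ‖g‖²`. Convexity of `ℓ` gives
`⟪g, w - u⟫ ≥ L w - L u`, while `|ℓ' t| = 1 / (1 + exp t) ≤ ℓ t`, `|y| = 1` and `‖x‖ ≤ 1` give
`‖g‖ ≤ L w`; as `η L w ≤ 1`, the quadratic term is at most `η L w`.
-/

open scoped RealInnerProductSpace

noncomputable def logisticLoss (t : ℝ) : ℝ := Real.log (1 + Real.exp (-t))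

lemma logisticLoss_pos (t : ℝ) : 0 < logisticLoss t :=
  Real.log_pos (lt_add_of_pos_right 1 (Real.exp_pos _))

lemma hasDerivAt_logisticLoss (t : ℝ) :
    HasDerivAt logisticLoss (-1 / (1 + Real.exp t)) t := by
  unfold logisticLoss
  have h := (((hasDerivAt_neg t).exp).const_add 1).log (by positivity)
  convert h using 1
  rw [Real.exp_neg]
  field_simp
  ring

lemma convexOn_logisticLoss : ConvexOn ℝ Set.univ logisticLoss := by
  refine Monotone.convexOn_univ_of_deriv (fun t => (hasDerivAt_logisticLoss t).differentiableAt) ?_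
  intro a b hab
  simp only [(hasDerivAt_logisticLoss _).deriv]
  rw [div_le_div_iff₀ (by positivity) (by positivity)]
  linarith [Real.exp_le_exp.2 hab]

lemma inv_one_add_exp_le_logisticLoss (t : ℝ) : (1 + Real.exp t)⁻¹ ≤ logisticLoss t := by
  unfold logisticLoss
  have h := Real.one_sub_inv_le_log_of_pos (x := 1 + Real.exp (-t)) (by positivity)
  convert h using 1
  rw [Real.exp_neg]
  field_simp
  ring

lemma ConvexOn.le_add_mul_sub_of_hasDerivAt {S : Set ℝ} {f : ℝ → ℝ} {f' a b : ℝ}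
    (hf : ConvexOn ℝ S f) (ha : a ∈ S) (hb : b ∈ S) (hd : HasDerivAt f f' a) :
    f a + f' * (b - a) ≤ f b := by
  rcases lt_trichotomy a b with hab | rfl | hab
  · have := hf.le_slope_of_hasDerivAt ha hb hab hd
    rw [slope_def_field, le_div_iff₀ (sub_pos.2 hab)] at this
    linarith
  · simp
  · have := hf.slope_le_of_hasDerivAt hb ha hab hd
    rw [slope_def_field, div_le_iff₀ (sub_pos.2 hab)] at this
    linarith

section InnerProductSpace

variable {E : Type*} [NormedAddCommGroup E] [InnerProductSpace ℝ E]

lemma norm_sub_smul_sub_sq_le {L : E → ℝ} {w u g : E} {η : ℝ} (hη : 0 ≤ η)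
    (hg : ‖g‖ ≤ L w) (hηL : η * L w ≤ 1) (hsub : L w - L u ≤ ⟪g, w - u⟫) :
    ‖w - η • g - u‖ ^ 2 ≤ ‖w - u‖ ^ 2 - η * L w + 2 * η * L u := by
  have hexpand : ‖w - η • g - u‖ ^ 2 = ‖w - u‖ ^ 2 - 2 * η * ⟪g, w - u⟫ + η ^ 2 * ‖g‖ ^ 2 := by
    rw [sub_right_comm, norm_sub_sq_real, inner_smul_right, real_inner_comm, norm_smul,
      Real.norm_of_nonneg hη]
    ring
  have hquad : η ^ 2 * ‖g‖ ^ 2 ≤ η * L w := by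
    have hLw : 0 ≤ L w := (norm_nonneg g).trans hg
    calc η ^ 2 * ‖g‖ ^ 2 ≤ η ^ 2 * L w ^ 2 := by gcongr
      _ = η * L w * (η * L w) := by ring
      _ ≤ η * L w := mul_le_of_le_one_right (mul_nonneg hη hLw) hηL
  have hdescent := mul_le_mul_of_nonneg_left hsub hη
  rw [hexpand]
  linarith

lemma logisticLoss_sub_le_inner (x w u : E) (y : ℝ) :
    logisticLoss (y * ⟪x, w⟫) - logisticLoss (y * ⟪x, u⟫) ≤
      ⟪(-y / (1 + Real.exp (y * ⟪x, w⟫))) • x, w - u⟫ := by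
  have h := convexOn_logisticLoss.le_add_mul_sub_of_hasDerivAt (Set.mem_univ _)
    (Set.mem_univ (y * ⟪x, u⟫)) (hasDerivAt_logisticLoss (y * ⟪x, w⟫))
  have hinner : ⟪(-y / (1 + Real.exp (y * ⟪x, w⟫))) • x, w - u⟫ =
      -1 / (1 + Real.exp (y * ⟪x, w⟫)) * (y * ⟪x, w⟫ - y * ⟪x, u⟫) := by
    rw [real_inner_smul_left, inner_sub_right]
    ring
  linarith

lemma norm_smul_le_logisticLoss {x : E} {y : ℝ} (hx : ‖x‖ ≤ 1) (hy : |y| ≤ 1) (t : ℝ) :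
    ‖(-y / (1 + Real.exp t)) • x‖ ≤ logisticLoss t := by
  have hpos : 0 < 1 + Real.exp t := by positivity
  calc ‖(-y / (1 + Real.exp t)) • x‖ = |y| * ‖x‖ * (1 + Real.exp t)⁻¹ := by
        rw [norm_smul, Real.norm_eq_abs, abs_div, abs_neg, abs_of_pos hpos]; ring
    _ ≤ 1 * 1 * (1 + Real.exp t)⁻¹ := by gcongr
    _ ≤ logisticLoss t := by simpa using inv_one_add_exp_le_logisticLoss t

end InnerProductSpace

/-- Pathwise SGD inequality for logistic loss: with step
`η = min {1/ε, 1/L_i(w)}` and update `w' = w − η • ∇L_i(w)` (where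
`L_i(v) = ln(1+exp(−y_i⟨x_i,v⟩))` and
`∇L_i(v) = (−y_i/(1+exp(y_i⟨x_i,v⟩))) • x_i`), for any comparator `u`,
`‖w' − u‖² ≤ ‖w − u‖² − η·L_i(w) + 2η·L_i(u)`. -/
theorem stmt_14 {d n : ℕ} (x : Fin n → EuclideanSpace ℝ (Fin d))
    (y : Fin n → ℝ) (hy : ∀ i, y i = 1 ∨ y i = -1) (hx : ∀ i, ‖x i‖ ≤ 1)
    (ε : ℝ) (hε : 0 < ε) (i : Fin n) (w u w' : EuclideanSpace ℝ (Fin d))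
    (Li : EuclideanSpace ℝ (Fin d) → ℝ)
    (hLi : Li = fun v => Real.log (1 + Real.exp (-(y i * ⟪x i, v⟫))))
    (η : ℝ) (hη : η = min (1 / ε) (1 / Li w))
    (hupdate : w' = w - η • ((-(y i) / (1 + Real.exp (y i * ⟪x i, w⟫))) • x i)) :
    ‖w' - u‖ ^ 2 ≤ ‖w - u‖ ^ 2 - η * Li w + 2 * η * Li u := by
  have hLi_pos : 0 < Li w := hLi ▸ logisticLoss_pos _
  have hη_nonneg : 0 ≤ η := hη ▸ le_min (by positivity) (by positivity)
  have hηL : η * Li w ≤ 1 := (le_div_iff₀ hLi_pos).1 (hη ▸ min_le_right _ _)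
  have hyi : |y i| ≤ 1 := by rcases hy i with h | h <;> simp [h]
  subst hupdate hLi
  exact norm_sub_smul_sub_sq_le (L := fun v => logisticLoss (y i * ⟪x i, v⟫)) hη_nonneg
    (norm_smul_le_logisticLoss (hx i) hyi _) hηL (logisticLoss_sub_le_inner _ _ _ _)
end

section
/- Consider gradient descent w_{t+1} = w_t − η_t ∇L(w_t) on the empirical logistic loss with separable data of margin γ and normalized features, where the loss satisfies L(w_k) ≤ 1/η_k for all k ∈ [s, t−1]. Then L(w_t) ≤ (2F(w_s) + ln²(γ²∑_{k=s}^{t-1} η_k)) / (γ²∑_{k=s}^{t-1} η_k), where F(w_s) = (1/n)∑_{i=1}^n exp(-y_i⟨x_i,w_s⟩). -/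
open scoped RealInnerProductSpace
open Finset

namespace Stmt16

noncomputable def ell (z : ℝ) : ℝ := Real.log (1 + Real.exp (-z))
noncomputable def sig (z : ℝ) : ℝ := 1 / (1 + Real.exp z)

lemma one_add_exp_pos (z : ℝ) : (0:ℝ) < 1 + Real.exp z := by positivity

lemma sig_nonneg (z : ℝ) : 0 ≤ sig z := by unfold sig; positivity

lemma ell_nonneg (z : ℝ) : 0 ≤ ell z :=
  Real.log_nonneg (by nlinarith [Real.exp_pos (-z)])

lemma ell_le_exp (z : ℝ) : ell z ≤ Real.exp (-z) := by
  have h := Real.log_le_sub_one_of_pos (one_add_exp_pos (-z))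
  unfold ell; linarith

lemma ell_antitone {z z' : ℝ} (h : z ≤ z') : ell z' ≤ ell z := by
  unfold ell
  have := Real.exp_le_exp.2 (neg_le_neg h)
  exact Real.log_le_log (by positivity) (by linarith)

lemma sig_le_ell (z : ℝ) : sig z ≤ ell z := by
  have h1 : (0:ℝ) < 1 + Real.exp (-z) := one_add_exp_pos (-z)
  have h := Real.log_le_sub_one_of_pos (x := (1 + Real.exp (-z))⁻¹) (by positivity)
  rw [Real.log_inv] at h
  have hz : Real.exp (-z) * Real.exp z = 1 := by rw [← Real.exp_add]; simp
  have hez : (0:ℝ) < 1 + Real.exp z := one_add_exp_pos z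
  unfold sig ell
  have key : (1:ℝ) - (1 + Real.exp (-z))⁻¹ = 1 / (1 + Real.exp z) := by
    field_simp
    nlinarith
  linarith [key ▸ (by linarith : (1:ℝ) - (1 + Real.exp (-z))⁻¹ ≤ Real.log (1 + Real.exp (-z)))]

/-- convexity tangent: ell z - (z'-z) * sig z ≤ ell z' -/
lemma tangent_aux (z δ : ℝ) : ell z - δ * sig z ≤ ell (z + δ) := by
  have hez : (0:ℝ) < 1 + Real.exp z := one_add_exp_pos z
  set w₂ : ℝ := 1 / (1 + Real.exp z) with hw2
  set E : ℝ := Real.exp (-δ * w₂) with hE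
  have e1 : E * (1 + δ * w₂) ≤ 1 := by
    have := Real.add_one_le_exp (δ * w₂)
    nlinarith [Real.exp_pos (-δ * w₂), Real.exp_pos (δ * w₂),
      (by rw [← Real.exp_add]; simp : Real.exp (-δ * w₂) * Real.exp (δ * w₂) = 1)]
  have e2 : E * (1 - δ * (1 - w₂)) ≤ Real.exp (-δ) := by
    have h := Real.add_one_le_exp (-δ + δ * w₂)
    have hmul : Real.exp (-δ * w₂) * Real.exp (-δ + δ * w₂) = Real.exp (-δ) := by
      rw [← Real.exp_add]; ring_nf
    nlinarith [Real.exp_pos (-δ * w₂)]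
  have h1 : Real.exp (-z) * Real.exp z = 1 := by rw [← Real.exp_add]; simp
  have hcancel : Real.exp (-z) * (1 - w₂) = w₂ := by
    rw [hw2]; field_simp; nlinarith
  have hbr : (1 + δ * w₂) + Real.exp (-z) * (1 - δ * (1 - w₂)) = 1 + Real.exp (-z) := by
    linear_combination -δ * hcancel
  have e2' : Real.exp (-z) * (E * (1 - δ * (1 - w₂))) ≤ Real.exp (-z) * Real.exp (-δ) :=
    mul_le_mul_of_nonneg_left e2 (Real.exp_pos (-z)).le
  have hexp : Real.exp (-(z+δ)) = Real.exp (-z) * Real.exp (-δ) := by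
    rw [← Real.exp_add]; ring_nf
  have expand : (1 + Real.exp (-z)) * E
      = E * (1 + δ * w₂) + Real.exp (-z) * (E * (1 - δ * (1 - w₂))) := by
    linear_combination -E * hbr
  have key : (1 + Real.exp (-z)) * E ≤ 1 + Real.exp (-(z + δ)) := by
    rw [hexp]; linarith
  have hpos1 : (0:ℝ) < 1 + Real.exp (-z) := one_add_exp_pos (-z)
  have hpos2 : (0:ℝ) < 1 + Real.exp (-(z+δ)) := one_add_exp_pos _
  have hlog := Real.log_le_log (by positivity) key
  rw [Real.log_mul (by positivity) (Real.exp_ne_zero _), Real.log_exp] at hlog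
  unfold ell sig
  rw [← hw2]
  linarith

/-- smoothness: for |z'-z| ≤ 1, ell z' ≤ ell z - (z'-z) sig z + (z'-z)^2 sig z -/
lemma smooth_aux (z δ : ℝ) (h : |δ| ≤ 1) :
    ell (z + δ) ≤ ell z - δ * sig z + δ ^ 2 * sig z := by
  have hez : (0:ℝ) < 1 + Real.exp z := one_add_exp_pos z
  have hpos1 : (0:ℝ) < 1 + Real.exp (-z) := one_add_exp_pos (-z)
  have hpos2 : (0:ℝ) < 1 + Real.exp (-(z+δ)) := one_add_exp_pos _
  -- step 1 : ell (z+δ) - ell z ≤ (exp(-δ) - 1) / (1 + exp z)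
  have hlog := Real.log_le_sub_one_of_pos (x := (1 + Real.exp (-(z+δ))) / (1 + Real.exp (-z))) (by positivity)
  rw [Real.log_div (by positivity) (by positivity)] at hlog
  have hratio : (1 + Real.exp (-(z+δ))) / (1 + Real.exp (-z)) - 1 = (Real.exp (-δ) - 1) / (1 + Real.exp z) := by
    have h1 : Real.exp (-(z+δ)) = Real.exp (-z) * Real.exp (-δ) := by rw [← Real.exp_add]; ring_nf
    have h2 : Real.exp (-z) * Real.exp z = 1 := by rw [← Real.exp_add]; simp
    rw [h1]; field_simp; ring_nf; nlinarith [h2, Real.exp_pos (-δ), Real.exp_pos z, Real.exp_pos (-z)]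
  -- step 2 : exp (-δ) - 1 ≤ -δ + δ^2
  have hb := Real.exp_bound (x := -δ) (by rwa [abs_neg]) (n := 2) (by norm_num)
  have hsum : ∑ m ∈ Finset.range 2, (-δ) ^ m / (m.factorial : ℝ) = 1 - δ := by
    simp [Finset.sum_range_succ]; ring
  rw [hsum] at hb
  have habs : |(-δ)| ^ 2 * ((2:ℕ).succ / ((2:ℕ).factorial * (2:ℕ)) : ℝ) = δ^2 * (3/4) := by
    rw [abs_neg, sq_abs]; norm_num [Nat.factorial]
  rw [habs] at hb
  have hstep2 : Real.exp (-δ) - 1 ≤ -δ + δ ^ 2 := by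
    have := abs_le.1 hb
    nlinarith [this.2]
  unfold ell sig
  have hdiv : (Real.exp (-δ) - 1) / (1 + Real.exp z) ≤ (-δ + δ^2) / (1 + Real.exp z) := by
    gcongr
  rw [hratio] at hlog
  have : (-δ + δ^2) / (1 + Real.exp z) = -(δ * (1/(1+Real.exp z))) + δ^2 * (1/(1+Real.exp z)) := by ring
  linarith [this ▸ (hlog.trans hdiv)]

lemma tangent (z z' : ℝ) : ell z - (z' - z) * sig z ≤ ell z' := by
  have := tangent_aux z (z' - z)
  rwa [show z + (z' - z) = z' by ring] at this

lemma smooth {z z' : ℝ} (h : |z' - z| ≤ 1) :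
    ell z' ≤ ell z - (z' - z) * sig z + (z' - z) ^ 2 * sig z := by
  have := smooth_aux z (z' - z) h
  rwa [show z + (z' - z) = z' by ring] at this


section Vec
variable {d n : ℕ} (x : Fin n → EuclideanSpace ℝ (Fin d)) (y : Fin n → ℝ)

noncomputable def LL (w : EuclideanSpace ℝ (Fin d)) : ℝ :=
  (1 / (n : ℝ)) * ∑ i, ell (y i * ⟪x i, w⟫)

noncomputable def GG (w : EuclideanSpace ℝ (Fin d)) : ℝ :=
  (1 / (n : ℝ)) * ∑ i, sig (y i * ⟪x i, w⟫)

noncomputable def gd (w : EuclideanSpace ℝ (Fin d)) : EuclideanSpace ℝ (Fin d) :=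
  (1 / (n : ℝ)) • ∑ i, (-(y i) / (1 + Real.exp (y i * ⟪x i, w⟫))) • x i

lemma inner_gd (w v : EuclideanSpace ℝ (Fin d)) :
    ⟪gd x y w, v⟫ = (1 / (n : ℝ)) * ∑ i, (-(sig (y i * ⟪x i, w⟫)) * (y i * ⟪x i, v⟫)) := by
  unfold gd
  rw [real_inner_smul_left, sum_inner]
  congr 1
  apply Finset.sum_congr rfl
  intro i _
  rw [real_inner_smul_left]
  unfold sig
  ring

lemma sig_nonneg' (z : ℝ) : 0 ≤ sig z := by unfold sig; positivity

lemma norm_gd_le (hy : ∀ i, y i = 1 ∨ y i = -1) (hx : ∀ i, ‖x i‖ ≤ 1)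
    (w : EuclideanSpace ℝ (Fin d)) : ‖gd x y w‖ ≤ GG x y w := by
  unfold gd GG
  rw [norm_smul]
  have h1n : (0:ℝ) ≤ 1 / (n:ℝ) := by positivity
  rw [Real.norm_eq_abs, abs_of_nonneg h1n]
  apply mul_le_mul_of_nonneg_left _ h1n
  calc ‖∑ i, (-(y i) / (1 + Real.exp (y i * ⟪x i, w⟫))) • x i‖
      ≤ ∑ i, ‖(-(y i) / (1 + Real.exp (y i * ⟪x i, w⟫))) • x i‖ := norm_sum_le _ _
    _ ≤ ∑ i, sig (y i * ⟪x i, w⟫) := by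
        apply Finset.sum_le_sum
        intro i _
        rw [norm_smul, Real.norm_eq_abs]
        set z := y i * ⟪x i, w⟫
        have hez : (0:ℝ) < 1 + Real.exp z := by positivity
        have habs : |(-(y i) / (1 + Real.exp z))| = sig z := by
          rw [abs_div, abs_neg, abs_of_pos hez]
          rcases hy i with h | h <;> rw [h] <;> unfold sig <;> norm_num
        rw [habs]
        calc sig z * ‖x i‖ ≤ sig z * 1 :=
              mul_le_mul_of_nonneg_left (hx i) (sig_nonneg' z)
          _ = sig z := mul_one _


lemma GG_nonneg (w : EuclideanSpace ℝ (Fin d)) : 0 ≤ GG x y w :=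
  mul_nonneg (by positivity) (Finset.sum_nonneg fun i _ => sig_nonneg _)

lemma LL_nonneg (w : EuclideanSpace ℝ (Fin d)) : 0 ≤ LL x y w :=
  mul_nonneg (by positivity) (Finset.sum_nonneg fun i _ => ell_nonneg _)

lemma GG_le_LL (w : EuclideanSpace ℝ (Fin d)) : GG x y w ≤ LL x y w :=
  mul_le_mul_of_nonneg_left (Finset.sum_le_sum fun i _ => sig_le_ell _) (by positivity)

lemma convexity (w v : EuclideanSpace ℝ (Fin d)) :
    LL x y w + ⟪gd x y w, v - w⟫ ≤ LL x y v := by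
  rw [inner_gd]
  unfold LL
  rw [Finset.mul_sum, Finset.mul_sum, Finset.mul_sum, ← Finset.sum_add_distrib]
  apply Finset.sum_le_sum
  intro i _
  have h := tangent (y i * ⟪x i, w⟫) (y i * ⟪x i, v⟫)
  have hin : y i * ⟪x i, v - w⟫ = y i * ⟪x i, v⟫ - y i * ⟪x i, w⟫ := by
    rw [inner_sub_right]; ring
  have hn0 : (0:ℝ) ≤ 1 / (n:ℝ) := by positivity
  calc (1/(n:ℝ)) * ell (y i * ⟪x i, w⟫) + (1/(n:ℝ)) * (-(sig (y i * ⟪x i, w⟫)) * (y i * ⟪x i, v - w⟫))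
      = (1/(n:ℝ)) * (ell (y i * ⟪x i, w⟫) - (y i * ⟪x i, v⟫ - y i * ⟪x i, w⟫) * sig (y i * ⟪x i, w⟫)) := by
        rw [hin]; ring
    _ ≤ (1/(n:ℝ)) * ell (y i * ⟪x i, v⟫) := mul_le_mul_of_nonneg_left h hn0

lemma descent (hy : ∀ i, y i = 1 ∨ y i = -1) (hx : ∀ i, ‖x i‖ ≤ 1)
    (w : EuclideanSpace ℝ (Fin d)) (η : ℝ) (hη : 0 < η)
    (hc : η * LL x y w ≤ 1) :
    LL x y (w - η • gd x y w) ≤ LL x y w := by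
  set g := gd x y w with hg
  have hgn : ‖g‖ ≤ GG x y w := norm_gd_le x y hy hx w
  have hGL : GG x y w ≤ LL x y w := GG_le_LL x y w
  have hGn : 0 ≤ GG x y w := GG_nonneg x y w
  have hr1 : η * ‖g‖ ≤ 1 := by nlinarith [norm_nonneg g]
  have key : ∀ i : Fin n, ell (y i * ⟪x i, w - η • g⟫)
      ≤ ell (y i * ⟪x i, w⟫)
        + (-(sig (y i * ⟪x i, w⟫)) * (y i * ⟪x i, (w - η • g) - w⟫))
        + (η * ‖g‖)^2 * sig (y i * ⟪x i, w⟫) := by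
    intro i
    set z := y i * ⟪x i, w⟫ with hz
    set z' := y i * ⟪x i, w - η • g⟫ with hz'
    have hin : y i * ⟪x i, (w - η • g) - w⟫ = z' - z := by
      rw [inner_sub_right]; ring
    have hδ : |z' - z| ≤ η * ‖g‖ := by
      have hd : z' - z = -(η * (y i * ⟪x i, g⟫)) := by
        rw [hz', inner_sub_right, real_inner_smul_right]; ring
      rw [hd, abs_neg, abs_mul, abs_mul, abs_of_pos hη]
      have h1 : |y i| = 1 := by rcases hy i with h|h <;> simp [h]
      rw [h1, one_mul]
      have := abs_real_inner_le_norm (x i) g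
      have hx1 : ‖x i‖ * ‖g‖ ≤ 1 * ‖g‖ :=
        mul_le_mul_of_nonneg_right (hx i) (norm_nonneg g)
      have h2 : |⟪x i, g⟫| ≤ ‖g‖ := this.trans (by linarith)
      exact mul_le_mul_of_nonneg_left h2 hη.le
    have h1 : |z' - z| ≤ 1 := hδ.trans hr1
    have hs := smooth h1
    have hsq : (z' - z)^2 ≤ (η * ‖g‖)^2 := by
      rw [← sq_abs]
      exact pow_le_pow_left₀ (abs_nonneg _) hδ 2
    have := sig_nonneg z
    rw [hin]
    nlinarith
  have hn0 : (0:ℝ) ≤ 1 / (n:ℝ) := by positivity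
  have main : LL x y (w - η • g)
      ≤ LL x y w + ⟪g, (w - η • g) - w⟫ + (η * ‖g‖)^2 * GG x y w := by
    have hM : LL x y w + ⟪g, (w - η • g) - w⟫ + (η * ‖g‖)^2 * GG x y w
        = (1/(n:ℝ)) * ∑ i, (ell (y i * ⟪x i, w⟫)
            + (-(sig (y i * ⟪x i, w⟫)) * (y i * ⟪x i, (w - η • g) - w⟫))
            + (η * ‖g‖)^2 * sig (y i * ⟪x i, w⟫)) := by
      rw [hg, inner_gd]
      unfold LL GG
      rw [Finset.mul_sum, Finset.mul_sum, Finset.mul_sum, Finset.mul_sum, Finset.mul_sum,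
        ← Finset.sum_add_distrib, ← Finset.sum_add_distrib]
      apply Finset.sum_congr rfl
      intro i _
      ring
    rw [hM]
    unfold LL
    exact mul_le_mul_of_nonneg_left (Finset.sum_le_sum fun i _ => key i) hn0
  have hΔ : ⟪g, (w - η • g) - w⟫ = -(η * ‖g‖^2) := by
    rw [show (w - η • g) - w = -(η • g) by abel]
    rw [inner_neg_right, real_inner_smul_right, real_inner_self_eq_norm_sq]
  rw [hΔ] at main
  have hηG : η * GG x y w ≤ 1 := by nlinarith
  have hfin : (η * ‖g‖)^2 * GG x y w ≤ η * ‖g‖^2 := by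
    nlinarith [mul_nonneg (mul_nonneg hη.le (sq_nonneg ‖g‖)) (sub_nonneg.2 hηG)]
  linarith

lemma one_step (hy : ∀ i, y i = 1 ∨ y i = -1) (hx : ∀ i, ‖x i‖ ≤ 1)
    (w u : EuclideanSpace ℝ (Fin d)) (η : ℝ) (hη : 0 < η)
    (hc : η * LL x y w ≤ 1) :
    ‖(w - η • gd x y w) - u‖^2 ≤ ‖w - u‖^2 - η * LL x y w + 2 * η * LL x y u := by
  set g := gd x y w with hg
  have hrw : (w - η • g) - u = (w - u) - η • g := by abel
  rw [hrw, norm_sub_sq_real]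
  have h1 : ⟪w - u, η • g⟫ = η * ⟪g, w - u⟫ := by
    rw [real_inner_smul_right, real_inner_comm]
  have h2 : ‖η • g‖^2 = η^2 * ‖g‖^2 := by
    rw [norm_smul, Real.norm_eq_abs, abs_of_pos hη, mul_pow]
  have hconv := convexity x y w u
  have h3 : ⟪g, u - w⟫ = -⟪g, w - u⟫ := by
    rw [show u - w = -(w - u) by abel, inner_neg_right]
  have hgn : ‖g‖ ≤ GG x y w := norm_gd_le x y hy hx w
  have hGL : GG x y w ≤ LL x y w := GG_le_LL x y w
  have hGn : 0 ≤ GG x y w := GG_nonneg x y w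
  have hLn : 0 ≤ LL x y w := LL_nonneg x y w
  have hsq : η^2 * ‖g‖^2 ≤ η * LL x y w := by
    have e1 : η * ‖g‖ ≤ η * LL x y w := mul_le_mul_of_nonneg_left (hgn.trans hGL) hη.le
    have e2 : η * ‖g‖ ≤ 1 := e1.trans hc
    have e3 : 0 ≤ η * ‖g‖ := mul_nonneg hη.le (norm_nonneg g)
    nlinarith [e1, e2, e3]
  rw [h1, h2]
  rw [h3] at hconv
  nlinarith

end Vec
end Stmt16

lemma stmt16_arith1 {A B C D F S γ : ℝ}
    (h4 : A * S ≤ C^2 + 2*B*S) (h2 : B * (S*γ^2) ≤ F) (hnorm : C^2*γ^2 = D^2) :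
    A * (γ^2*S) ≤ 2*F + D^2 := by
  nlinarith [mul_le_mul_of_nonneg_right h4 (sq_nonneg γ)]

lemma stmt16_arith2 {A B F S γ D : ℝ} (hA : 0 ≤ A) (h1 : A ≤ B) (h2 : B ≤ F)
    (hcase : γ^2*S < 1) (hγS : 0 < γ^2*S) : A * (γ^2*S) ≤ 2*F + D^2 := by
  nlinarith [sq_nonneg D, mul_nonneg hA (by linarith : (0:ℝ) ≤ 1 - γ^2*S)]


/-- Stable-phase bound for gradient descent on separable logistic regression:
if `L(w_k) ≤ 1/η_k` for all `k ∈ [s, t−1]`, then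
`L(w_t) ≤ (2F(w_s) + ln²(γ²∑_{k=s}^{t-1} η_k)) / (γ²∑_{k=s}^{t-1} η_k)`. -/
theorem stmt_16 {d n : ℕ} (hn : 1 ≤ n) (x : Fin n → EuclideanSpace ℝ (Fin d))
    (y : Fin n → ℝ) (hy : ∀ i, y i = 1 ∨ y i = -1) (hx : ∀ i, ‖x i‖ ≤ 1)
    (wstar : EuclideanSpace ℝ (Fin d)) (hwstar : ‖wstar‖ = 1)
    (γ : ℝ) (hγ : 0 < γ) (hmargin : ∀ i, γ ≤ y i * ⟪x i, wstar⟫)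
    (L : EuclideanSpace ℝ (Fin d) → ℝ)
    (hL : L = fun w => (1 / (n : ℝ)) * ∑ i, Real.log (1 + Real.exp (-(y i * ⟪x i, w⟫))))
    (gradL : EuclideanSpace ℝ (Fin d) → EuclideanSpace ℝ (Fin d))
    (hgrad : gradL = fun w =>
      (1 / (n : ℝ)) • ∑ i, (-(y i) / (1 + Real.exp (y i * ⟪x i, w⟫))) • x i)
    (w : ℕ → EuclideanSpace ℝ (Fin d)) (η : ℕ → ℝ) (hηpos : ∀ k, 0 < η k)
    (hupdate : ∀ k, w (k + 1) = w k - η k • gradL (w k))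
    (s t : ℕ) (hst : s < t)
    (hcond : ∀ k, s ≤ k → k < t → L (w k) ≤ 1 / η k) :
    L (w t) ≤
      (2 * ((1 / (n : ℝ)) * ∑ i, Real.exp (-(y i * ⟪x i, w s⟫)))
          + (Real.log (γ ^ 2 * ∑ k ∈ Finset.Ico s t, η k)) ^ 2)
        / (γ ^ 2 * ∑ k ∈ Finset.Ico s t, η k) := by
  have hnpos : (0:ℝ) < (n:ℝ) := by exact_mod_cast hn
  have hLeq : L = Stmt16.LL x y := by
    funext v; rw [hL]; simp [Stmt16.LL, Stmt16.ell]
  have hgeq : gradL = Stmt16.gd x y := by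
    funext v; rw [hgrad]; simp [Stmt16.gd]
  rw [hLeq] at hcond ⊢
  set S := ∑ k ∈ Finset.Ico s t, η k with hS
  have hSpos : 0 < S := Finset.sum_pos (fun k _ => hηpos k) (Finset.nonempty_Ico.mpr hst)
  have hγS : 0 < γ^2 * S := by positivity
  set F := (1/(n:ℝ)) * ∑ i, Real.exp (-(y i * ⟪x i, w s⟫)) with hF
  have hFnn : 0 ≤ F := by rw [hF]; positivity
  have hcnd : ∀ k, s ≤ k → k < t → η k * Stmt16.LL x y (w k) ≤ 1 := by
    intro k hk1 hk2
    rw [mul_comm]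
    exact (le_div_iff₀ (hηpos k)).1 (hcond k hk1 hk2)
  have hup : ∀ k, w (k+1) = w k - η k • Stmt16.gd x y (w k) := by
    intro k; rw [hupdate k, hgeq]
  have hmono : ∀ a b : ℕ, s ≤ a → ∀ hab : a ≤ b, b ≤ t →
      Stmt16.LL x y (w b) ≤ Stmt16.LL x y (w a) := by
    intro a b hsa hab
    induction b, hab using Nat.le_induction with
    | base => intro _; exact le_rfl
    | succ b hab ih =>
      intro hbt
      have hsb : s ≤ b := le_trans hsa hab
      have hbt' : b < t := hbt
      have hstep := Stmt16.descent x y hy hx (w b) (η b) (hηpos b) (hcnd b hsb hbt')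
      rw [← hup b] at hstep
      exact hstep.trans (ih (by omega))
  have hsum : ∀ u : EuclideanSpace ℝ (Fin d),
      (∑ k ∈ Finset.Ico s t, η k * Stmt16.LL x y (w k)) + ‖w t - u‖^2
        ≤ ‖w s - u‖^2 + 2 * Stmt16.LL x y u * S := by
    intro u
    have key : ∀ m, ∀ hm : s ≤ m, m ≤ t →
        (∑ k ∈ Finset.Ico s m, η k * Stmt16.LL x y (w k)) + ‖w m - u‖^2
          ≤ ‖w s - u‖^2 + 2 * Stmt16.LL x y u * (∑ k ∈ Finset.Ico s m, η k) := by
      intro m hm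
      induction m, hm using Nat.le_induction with
      | base => intro _; simp
      | succ m hm ih =>
        intro hmt
        have hmt' : m < t := hmt
        have h1 := ih (le_of_lt hmt')
        rw [Finset.sum_Ico_succ_top hm, Finset.sum_Ico_succ_top hm]
        have hstep := Stmt16.one_step x y hy hx (w m) u (η m) (hηpos m) (hcnd m hm hmt')
        rw [← hup m] at hstep
        have hLu := Stmt16.LL_nonneg x y u
        linarith
    exact key t hst.le le_rfl
  have havg : Stmt16.LL x y (w t) * S ≤ ∑ k ∈ Finset.Ico s t, η k * Stmt16.LL x y (w k) := by
    rw [hS, Finset.mul_sum]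
    apply Finset.sum_le_sum
    intro k hk
    rw [Finset.mem_Ico] at hk
    have := hmono k t hk.1 hk.2.le le_rfl
    calc Stmt16.LL x y (w t) * η k = η k * Stmt16.LL x y (w t) := mul_comm _ _
      _ ≤ η k * Stmt16.LL x y (w k) := mul_le_mul_of_nonneg_left this (hηpos k).le
  have hLtnn : 0 ≤ Stmt16.LL x y (w t) := Stmt16.LL_nonneg x y (w t)
  rcases le_or_gt 1 (γ^2*S) with hcase | hcase
  · -- main case
    set β := Real.log (γ^2*S) / γ with hβ
    have hβnn : 0 ≤ β := div_nonneg (Real.log_nonneg hcase) hγ.le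
    set u := w s + β • wstar with hu
    have hnorm : ‖w s - u‖^2 * γ^2 = (Real.log (γ^2*S))^2 := by
      rw [hu, show w s - (w s + β • wstar) = -(β • wstar) by abel, norm_neg, norm_smul,
        Real.norm_eq_abs, abs_of_nonneg hβnn, hwstar, mul_one, hβ]
      field_simp
    have hLu : Stmt16.LL x y u ≤ F / (γ^2*S) := by
      have hFdiv : F / (γ^2*S) = (1/(n:ℝ)) * ∑ i, (Real.exp (-(y i * ⟪x i, w s⟫)) * (γ^2*S)⁻¹) := by
        rw [hF, ← Finset.sum_mul]; ring
      rw [hFdiv]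
      unfold Stmt16.LL
      apply mul_le_mul_of_nonneg_left _ (by positivity)
      apply Finset.sum_le_sum
      intro i _
      have hge : y i * ⟪x i, w s⟫ + β*γ ≤ y i * ⟪x i, u⟫ := by
        have hz : y i * ⟪x i, u⟫ = y i * ⟪x i, w s⟫ + β * (y i * ⟪x i, wstar⟫) := by
          rw [hu, inner_add_right, real_inner_smul_right]; ring
        rw [hz]
        nlinarith [hmargin i, hβnn]
      have hβγ : β * γ = Real.log (γ^2*S) := by rw [hβ]; field_simp
      calc Stmt16.ell (y i * ⟪x i, u⟫) ≤ Stmt16.ell (y i * ⟪x i, w s⟫ + β*γ) :=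
            Stmt16.ell_antitone hge
        _ ≤ Real.exp (-(y i * ⟪x i, w s⟫ + β*γ)) := Stmt16.ell_le_exp _
        _ = Real.exp (-(y i * ⟪x i, w s⟫)) * Real.exp (-(β*γ)) := by
            rw [← Real.exp_add]; ring_nf
        _ = Real.exp (-(y i * ⟪x i, w s⟫)) * (γ^2*S)⁻¹ := by
            rw [hβγ, Real.exp_neg (Real.log (γ^2*S)), Real.exp_log hγS]
    have h4 : Stmt16.LL x y (w t) * S ≤ ‖w s - u‖^2 + 2 * Stmt16.LL x y u * S := by
      have h5 := hsum u
      nlinarith [sq_nonneg ‖w t - u‖, havg]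
    have h2 : Stmt16.LL x y u * (S * γ^2) ≤ F := by
      have h6 : Stmt16.LL x y u * (S * γ^2) ≤ (F / (γ^2*S)) * (S * γ^2) :=
        mul_le_mul_of_nonneg_right hLu (by positivity)
      have h7 : F / (γ^2*S) * (S * γ^2) = F := by
        rw [show S*γ^2 = γ^2*S by ring, div_mul_cancel₀ _ hγS.ne']
      linarith [h7 ▸ h6]
    rw [le_div_iff₀ hγS]
    exact stmt16_arith1 h4 h2 hnorm
  · -- small case
    have hLt : Stmt16.LL x y (w t) ≤ Stmt16.LL x y (w s) := hmono s t le_rfl hst.le le_rfl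
    have hLF : Stmt16.LL x y (w s) ≤ F := by
      rw [hF]
      exact mul_le_mul_of_nonneg_left
        (Finset.sum_le_sum fun i _ => Stmt16.ell_le_exp _) (by positivity)
    rw [le_div_iff₀ hγS]
    exact stmt16_arith2 hLtnn hLt hLF hcase hγS
end

section
/- Gradient descent on separable logistic regression initialized at w_0 = 0 with the schedule η_0 = 1/ln 2 and η_t = S_{t-1}/(2·max{2F(w_0), ln²(S_{t-1})}) for t ≥ 1, where S_t = γ²∑_{k=0}^t η_k and F(w_0) = (1/n)∑_i exp(-y_i⟨x_i,w_0⟩), satisfies L(w_t) ≤ 1/η_t for all t ≥ 0; consequently the loss iterates are monotonically non-increasing. -/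
/-!
The logistic loss `ℓ(z) = log (1 + exp (-z))` is self-bounding: `|ℓ'| ≤ ℓ`, and for `|h| ≤ 1`
`ℓ (z + h) ≤ ℓ z + ℓ' z * h + h ^ 2 * ℓ z` (the constant `1` comes from
`exp t - 1 - t ≤ t ^ 2` on `[-1, 1]`). Hence `‖∇L‖ ≤ L`, and a gradient step of size `η` with
`η * L w ≤ 1` does not increase the risk. If all steps up to `t` are stable in this sense, the
usual convexity telescoping against a comparator `u` gives
`(∑ k ≤ t, η k) * L (w (t + 1)) ≤ ‖u‖ ^ 2 + 2 * (∑ k ≤ t, η k) * L u`. Taking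
`u = (log S_t / γ) • w*` (or `u = 0` when `S_t < 1`) yields `S_t * L (w (t + 1)) ≤ 2 + log² S_t`,
which is at most `S_t / η (t + 1)` because `F(w₀) = 1` at `w₀ = 0`. So the bound propagates by
strong induction, and each step is stable, so the loss is monotone.
-/

open Real
open scoped RealInnerProductSpace

noncomputable def logLoss (z : ℝ) : ℝ := log (1 + exp (-z))

noncomputable def logLossDeriv (z : ℝ) : ℝ := -(1 + exp z)⁻¹

noncomputable def logLossDeriv2 (z : ℝ) : ℝ := exp z / (1 + exp z) ^ 2

theorem le_of_hasDerivAt_le_of_nonneg {f g f' g' : ℝ → ℝ} (hf : ∀ s, HasDerivAt f (f' s) s)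
    (hg : ∀ s, HasDerivAt g (g' s) s) (h₀ : f 0 ≤ g 0) (hle : ∀ s, 0 ≤ s → f' s ≤ g' s)
    {t : ℝ} (ht : 0 ≤ t) : f t ≤ g t :=
  image_le_of_deriv_right_le_deriv_boundary (fun s _ ↦ (hf s).continuousAt.continuousWithinAt)
    (fun s _ ↦ (hf s).hasDerivWithinAt) h₀ (fun s _ ↦ (hg s).continuousAt.continuousWithinAt)
    (fun s _ ↦ (hg s).hasDerivWithinAt) (fun s hs ↦ hle s hs.1) ⟨ht, le_rfl⟩

theorem hasDerivAt_logLoss (z : ℝ) : HasDerivAt logLoss (logLossDeriv z) z := by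
  refine ((((hasDerivAt_neg z).exp).const_add 1).log (by positivity)).congr_deriv ?_
  have : exp (-z) * exp z = 1 := by rw [← exp_add, neg_add_cancel, exp_zero]
  rw [logLossDeriv]
  field_simp
  linear_combination -this

theorem hasDerivAt_logLossDeriv (z : ℝ) : HasDerivAt logLossDeriv (logLossDeriv2 z) z := by
  refine ((((hasDerivAt_exp z).const_add 1).inv (by positivity)).neg).congr_deriv ?_
  rw [logLossDeriv2]
  ring

theorem logLoss_pos (z : ℝ) : 0 < logLoss z :=
  log_pos (by linarith [exp_pos (-z)])

theorem logLoss_antitone : Antitone logLoss := fun a b hab ↦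
  log_le_log (by positivity) (by gcongr)

theorem logLossDeriv_monotone : Monotone logLossDeriv := fun a b hab ↦ by
  simp only [logLossDeriv, neg_le_neg_iff]
  gcongr

theorem logLoss_le_exp_neg (z : ℝ) : logLoss z ≤ exp (-z) := by
  have := log_le_sub_one_of_pos (x := 1 + exp (-z)) (by positivity)
  rw [logLoss]
  linarith

theorem abs_logLossDeriv_le_logLoss (z : ℝ) : |logLossDeriv z| ≤ logLoss z := by
  have : (1 + exp z)⁻¹ = 1 - (1 + exp (-z))⁻¹ := by
    rw [exp_neg]
    field_simp
    ring
  rw [logLossDeriv, abs_neg, abs_of_pos (by positivity), this]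
  exact one_sub_inv_le_log_of_pos (by positivity)

theorem logLossDeriv2_le_logLoss (z : ℝ) : logLossDeriv2 z ≤ logLoss z := by
  refine le_trans ?_ (abs_logLossDeriv_le_logLoss z)
  rw [logLossDeriv, abs_neg, abs_of_pos (by positivity), logLossDeriv2, sq, ← div_div,
    div_le_iff₀ (by positivity), inv_mul_cancel₀ (by positivity)]
  exact div_le_one_of_le₀ (by linarith) (by positivity)

theorem logLoss_sub_le_exp_mul (z : ℝ) {t : ℝ} (ht : 0 ≤ t) :
    logLoss (z - t) ≤ exp t * logLoss z := by
  have hbern : 1 + exp t * exp (-z) ≤ (1 + exp (-z)) ^ exp t :=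
    one_add_mul_self_le_rpow_one_add (by linarith [exp_pos (-z)]) (one_le_exp ht)
  calc logLoss (z - t) = log (1 + exp t * exp (-z)) := by
        rw [logLoss, ← exp_add, neg_sub, sub_eq_neg_add, add_comm t]
    _ ≤ log ((1 + exp (-z)) ^ exp t) := log_le_log (by positivity) hbern
    _ = exp t * logLoss z := log_rpow (by positivity) _

theorem logLoss_add_logLossDeriv_mul_le (a b : ℝ) :
    logLoss a + logLossDeriv a * (b - a) ≤ logLoss b := by
  rcases le_total a b with hab | hab
  · have := le_of_hasDerivAt_le_of_nonneg (f := fun s ↦ logLoss a + logLossDeriv a * s)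
      (g := fun s ↦ logLoss (a + s)) (fun s ↦ ((hasDerivAt_id s).const_mul _).const_add _)
      (fun s ↦ (hasDerivAt_logLoss (a + s)).comp_const_add a s) (by simp)
      (fun s hs ↦ by simpa using logLossDeriv_monotone (le_add_of_nonneg_right hs))
      (sub_nonneg.2 hab)
    simpa using this
  · have := le_of_hasDerivAt_le_of_nonneg (f := fun s ↦ logLoss a - logLossDeriv a * s)
      (g := fun s ↦ logLoss (a - s)) (fun s ↦ ((hasDerivAt_id s).const_mul _).const_sub _)
      (fun s ↦ (hasDerivAt_logLoss (a - s)).comp_const_sub a s) (by simp)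
      (fun s hs ↦ by simpa using logLossDeriv_monotone (sub_le_self a hs))
      (sub_nonneg.2 hab)
    simp only [sub_sub_cancel] at this
    linarith

theorem logLossDeriv_add_le (z : ℝ) {h : ℝ} (hh : 0 ≤ h) :
    logLossDeriv (z + h) ≤ logLossDeriv z + h * logLoss z :=
  le_of_hasDerivAt_le_of_nonneg (f := fun s ↦ logLossDeriv (z + s))
    (g := fun s ↦ logLossDeriv z + s * logLoss z)
    (fun s ↦ (hasDerivAt_logLossDeriv (z + s)).comp_const_add z s)
    (fun s ↦ (hasDerivAt_mul_const _).const_add _) (by simp)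
    (fun s hs ↦ (logLossDeriv2_le_logLoss _).trans (logLoss_antitone (le_add_of_nonneg_right hs)))
    hh

theorem logLoss_add_le_of_nonneg (z : ℝ) {h : ℝ} (hh : 0 ≤ h) :
    logLoss (z + h) ≤ logLoss z + logLossDeriv z * h + h ^ 2 / 2 * logLoss z :=
  le_of_hasDerivAt_le_of_nonneg (f := fun s ↦ logLoss (z + s))
    (g := fun s ↦ logLoss z + logLossDeriv z * s + s ^ 2 / 2 * logLoss z)
    (g' := fun s ↦ logLossDeriv z + s * logLoss z)
    (fun s ↦ (hasDerivAt_logLoss (z + s)).comp_const_add z s)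
    (fun s ↦ ((((hasDerivAt_id s).const_mul _).const_add _).add
      (((hasDerivAt_pow 2 s).div_const 2).mul_const _)).congr_deriv (by ring))
    (by simp) (fun s hs ↦ logLossDeriv_add_le z hs) hh

theorem neg_logLossDeriv_sub_le (z : ℝ) {t : ℝ} (ht : 0 ≤ t) :
    -logLossDeriv (z - t) ≤ -logLossDeriv z + (exp t - 1) * logLoss z :=
  le_of_hasDerivAt_le_of_nonneg (f := fun s ↦ -logLossDeriv (z - s))
    (g := fun s ↦ -logLossDeriv z + (exp s - 1) * logLoss z)
    (fun s ↦ ((hasDerivAt_logLossDeriv (z - s)).comp_const_sub z s).neg.congr_deriv (neg_neg _))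
    (fun s ↦ (((hasDerivAt_exp s).sub_const 1).mul_const _).const_add _) (by simp)
    (fun s hs ↦ (logLossDeriv2_le_logLoss _).trans (logLoss_sub_le_exp_mul z hs)) ht

theorem logLoss_sub_le (z : ℝ) {t : ℝ} (ht : 0 ≤ t) :
    logLoss (z - t) ≤ logLoss z - logLossDeriv z * t + (exp t - 1 - t) * logLoss z :=
  le_of_hasDerivAt_le_of_nonneg (f := fun s ↦ logLoss (z - s))
    (g := fun s ↦ logLoss z - logLossDeriv z * s + (exp s - 1 - s) * logLoss z)
    (g' := fun s ↦ -logLossDeriv z + (exp s - 1) * logLoss z)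
    (fun s ↦ (hasDerivAt_logLoss (z - s)).comp_const_sub z s)
    (fun s ↦ ((((hasDerivAt_id s).const_mul _).const_sub _).add
      ((((hasDerivAt_exp s).sub_const 1).sub (hasDerivAt_id s)).mul_const _)).congr_deriv
        (by ring))
    (by simp) (fun s hs ↦ neg_logLossDeriv_sub_le z hs) ht

theorem logLoss_add_le (z : ℝ) {h : ℝ} (hh : |h| ≤ 1) :
    logLoss (z + h) ≤ logLoss z + logLossDeriv z * h + h ^ 2 * logLoss z := by
  have hpos := logLoss_pos z
  rcases le_total 0 h with h0 | h0
  · nlinarith [logLoss_add_le_of_nonneg z h0, sq_nonneg h]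
  · have hexp := abs_le.1 (abs_exp_sub_one_sub_id_le (x := -h) (by rwa [abs_neg]))
    have := logLoss_sub_le z (neg_nonneg.2 h0)
    rw [sub_neg_eq_add] at this
    nlinarith

section LogisticRegression

variable {ι E : Type*} [Fintype ι] [NormedAddCommGroup E] [InnerProductSpace ℝ E]

-- `z i` plays the role of the signed sample `y i • x i`.
noncomputable def logisticRisk (z : ι → E) (w : E) : ℝ :=
  (Fintype.card ι : ℝ)⁻¹ * ∑ i, logLoss ⟪z i, w⟫

noncomputable def logisticRiskGrad (z : ι → E) (w : E) : E :=
  (Fintype.card ι : ℝ)⁻¹ • ∑ i, logLossDeriv ⟪z i, w⟫ • z i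

variable {z : ι → E}

theorem inner_logisticRiskGrad (v u : E) :
    ⟪logisticRiskGrad z v, u⟫ = (Fintype.card ι : ℝ)⁻¹ * ∑ i, logLossDeriv ⟪z i, v⟫ * ⟪z i, u⟫ := by
  simp only [logisticRiskGrad, real_inner_smul_left, sum_inner]

theorem logisticRisk_le_logLoss {u : E} {r : ℝ} (h : ∀ i, r ≤ ⟪z i, u⟫) :
    logisticRisk z u ≤ logLoss r := by
  rcases isEmpty_or_nonempty ι with hι | hι
  · simp [logisticRisk, (logLoss_pos r).le]
  calc logisticRisk z u ≤ (Fintype.card ι : ℝ)⁻¹ * ∑ _i : ι, logLoss r := by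
        unfold logisticRisk
        gcongr with i
        exact logLoss_antitone (h i)
    _ = logLoss r := by simp

theorem norm_logisticRiskGrad_le (hz : ∀ i, ‖z i‖ ≤ 1) (v : E) :
    ‖logisticRiskGrad z v‖ ≤ logisticRisk z v := by
  rw [logisticRiskGrad, logisticRisk, norm_smul, norm_inv, Real.norm_natCast]
  gcongr
  refine (norm_sum_le _ _).trans (Finset.sum_le_sum fun i _ ↦ ?_)
  rw [norm_smul, Real.norm_eq_abs]
  calc |logLossDeriv ⟪z i, v⟫| * ‖z i‖ ≤ |logLossDeriv ⟪z i, v⟫| * 1 := by gcongr; exact hz i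
    _ ≤ logLoss ⟪z i, v⟫ := by rw [mul_one]; exact abs_logLossDeriv_le_logLoss _

theorem logisticRisk_sub_le_inner (v u : E) :
    logisticRisk z v - logisticRisk z u ≤ ⟪logisticRiskGrad z v, v - u⟫ := by
  rw [inner_logisticRiskGrad, logisticRisk, logisticRisk, ← mul_sub, ← Finset.sum_sub_distrib]
  gcongr with i
  have := logLoss_add_logLossDeriv_mul_le ⟪z i, v⟫ ⟪z i, u⟫
  rw [inner_sub_right]
  linarith

theorem logisticRisk_sub_smul_grad_le (hz : ∀ i, ‖z i‖ ≤ 1) (v : E) {c : ℝ} (hc : 0 ≤ c)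
    (hcg : c * ‖logisticRiskGrad z v‖ ≤ 1) :
    logisticRisk z (v - c • logisticRiskGrad z v) ≤
      logisticRisk z v - c * ‖logisticRiskGrad z v‖ ^ 2 +
        c ^ 2 * ‖logisticRiskGrad z v‖ ^ 2 * logisticRisk z v := by
  set g := logisticRiskGrad z v
  have hzg : ∀ i, |⟪z i, g⟫| ≤ ‖g‖ := fun i ↦
    (abs_real_inner_le_norm _ _).trans (mul_le_of_le_one_left (norm_nonneg _) (hz i))
  have hterm : ∀ i, logLoss ⟪z i, v - c • g⟫ ≤ logLoss ⟪z i, v⟫ -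
      c * (logLossDeriv ⟪z i, v⟫ * ⟪z i, g⟫) + c ^ 2 * ‖g‖ ^ 2 * logLoss ⟪z i, v⟫ := by
    intro i
    have hsmall : |-(c * ⟪z i, g⟫)| ≤ 1 := by
      rw [abs_neg, abs_mul, abs_of_nonneg hc]
      exact (mul_le_mul_of_nonneg_left (hzg i) hc).trans hcg
    have hsq : ⟪z i, g⟫ ^ 2 ≤ ‖g‖ ^ 2 := sq_le_sq' (abs_le.1 (hzg i)).1 (abs_le.1 (hzg i)).2
    have hquad : (-(c * ⟪z i, g⟫)) ^ 2 * logLoss ⟪z i, v⟫ ≤ c ^ 2 * ‖g‖ ^ 2 * logLoss ⟪z i, v⟫ := by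
      rw [neg_sq, mul_pow, mul_assoc, mul_assoc]
      gcongr
      exact (logLoss_pos _).le
    have := logLoss_add_le ⟪z i, v⟫ hsmall
    rw [inner_sub_right, real_inner_smul_right, sub_eq_add_neg]
    linarith
  calc logisticRisk z (v - c • g)
      ≤ (Fintype.card ι : ℝ)⁻¹ * ∑ i, (logLoss ⟪z i, v⟫ -
          c * (logLossDeriv ⟪z i, v⟫ * ⟪z i, g⟫) + c ^ 2 * ‖g‖ ^ 2 * logLoss ⟪z i, v⟫) := by
        unfold logisticRisk
        gcongr with i
        exact hterm i
    _ = logisticRisk z v - c * ⟪g, g⟫ + c ^ 2 * ‖g‖ ^ 2 * logisticRisk z v := by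
        rw [inner_logisticRiskGrad, logisticRisk, Finset.sum_add_distrib, Finset.sum_sub_distrib,
          ← Finset.mul_sum, ← Finset.mul_sum]
        ring
    _ = _ := by rw [real_inner_self_eq_norm_sq]

theorem logisticRisk_sub_smul_grad_le_self (hz : ∀ i, ‖z i‖ ≤ 1) (v : E) {c : ℝ} (hc : 0 ≤ c)
    (hcL : c * logisticRisk z v ≤ 1) :
    logisticRisk z (v - c • logisticRiskGrad z v) ≤ logisticRisk z v := by
  have hgL := norm_logisticRiskGrad_le hz v
  have hcg : c * ‖logisticRiskGrad z v‖ ≤ 1 := (mul_le_mul_of_nonneg_left hgL hc).trans hcL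
  have hquad : c * ‖logisticRiskGrad z v‖ ^ 2 * (c * logisticRisk z v) ≤
      c * ‖logisticRiskGrad z v‖ ^ 2 :=
    mul_le_of_le_one_right (by positivity) hcL
  linarith [logisticRisk_sub_smul_grad_le hz v hc hcg]

theorem mul_logisticRisk_le_sq_dist_sub (hz : ∀ i, ‖z i‖ ≤ 1) (v u : E) {c : ℝ} (hc : 0 ≤ c)
    (hcL : c * logisticRisk z v ≤ 1) :
    c * logisticRisk z v ≤
      ‖v - u‖ ^ 2 - ‖v - c • logisticRiskGrad z v - u‖ ^ 2 + 2 * c * logisticRisk z u := by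
  set g := logisticRiskGrad z v
  have hexpand : ‖v - c • g - u‖ ^ 2 = ‖v - u‖ ^ 2 - 2 * c * ⟪g, v - u⟫ + c ^ 2 * ‖g‖ ^ 2 := by
    rw [sub_right_comm, norm_sub_sq_real, real_inner_smul_right, norm_smul, Real.norm_eq_abs,
      mul_pow, sq_abs, real_inner_comm]
    ring
  have hconv : c * (logisticRisk z v - logisticRisk z u) ≤ c * ⟪g, v - u⟫ :=
    mul_le_mul_of_nonneg_left (logisticRisk_sub_le_inner v u) hc
  have hcg : c * ‖g‖ ≤ c * logisticRisk z v :=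
    mul_le_mul_of_nonneg_left (norm_logisticRiskGrad_le hz v) hc
  have hcg2 : c ^ 2 * ‖g‖ ^ 2 ≤ c * logisticRisk z v := by
    have : 0 ≤ c * ‖g‖ := by positivity
    nlinarith
  linarith

variable {w : ℕ → E} {η : ℕ → ℝ}

theorem sum_mul_logisticRisk_le (hz : ∀ i, ‖z i‖ ≤ 1)
    (hupdate : ∀ t, w (t + 1) = w t - η t • logisticRiskGrad z (w t)) {t : ℕ}
    (hη : ∀ k ≤ t, 0 ≤ η k) (hstable : ∀ k ≤ t, η k * logisticRisk z (w k) ≤ 1) (u : E) :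
    (∑ k ∈ Finset.range (t + 1), η k) * logisticRisk z (w (t + 1)) ≤
      ‖w 0 - u‖ ^ 2 + 2 * (∑ k ∈ Finset.range (t + 1), η k) * logisticRisk z u := by
  have hlast : ∀ k ≤ t + 1, logisticRisk z (w (t + 1)) ≤ logisticRisk z (w k) := by
    intro k hk
    induction hk using Nat.decreasingInduction with
    | self => exact le_rfl
    | of_succ k hk ih =>
      refine ih.trans ?_
      rw [hupdate k]
      exact logisticRisk_sub_smul_grad_le_self hz _ (hη k (by omega)) (hstable k (by omega))
  have hstep : ∀ k ∈ Finset.range (t + 1), η k * logisticRisk z (w (t + 1)) ≤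
      (‖w k - u‖ ^ 2 - ‖w (k + 1) - u‖ ^ 2) + 2 * (η k * logisticRisk z u) := by
    intro k hk
    have hk : k ≤ t := Nat.lt_succ_iff.mp (Finset.mem_range.mp hk)
    have := mul_logisticRisk_le_sq_dist_sub hz (w k) u (hη k hk) (hstable k hk)
    rw [← hupdate k] at this
    have := mul_le_mul_of_nonneg_left (hlast k (by omega)) (hη k hk)
    linarith
  calc (∑ k ∈ Finset.range (t + 1), η k) * logisticRisk z (w (t + 1))
      ≤ ∑ k ∈ Finset.range (t + 1), ((‖w k - u‖ ^ 2 - ‖w (k + 1) - u‖ ^ 2) +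
          2 * (η k * logisticRisk z u)) := by
        rw [Finset.sum_mul]
        exact Finset.sum_le_sum hstep
    _ = ‖w 0 - u‖ ^ 2 - ‖w (t + 1) - u‖ ^ 2 +
          2 * (∑ k ∈ Finset.range (t + 1), η k) * logisticRisk z u := by
        rw [Finset.sum_add_distrib, Finset.sum_range_sub', ← Finset.mul_sum, ← Finset.sum_mul,
          mul_assoc]
    _ ≤ _ := by linarith [sq_nonneg ‖w (t + 1) - u‖]

theorem mul_logisticRisk_le_two_add_log_sq (hz : ∀ i, ‖z i‖ ≤ 1)
    (hupdate : ∀ t, w (t + 1) = w t - η t • logisticRiskGrad z (w t)) (hw0 : w 0 = 0)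
    {wstar : E} (hwstar : ‖wstar‖ ≤ 1) {γ : ℝ} (hγ : 0 < γ) (hmargin : ∀ i, γ ≤ ⟪z i, wstar⟫)
    {t : ℕ} (hη : ∀ k ≤ t, 0 ≤ η k) (hstable : ∀ k ≤ t, η k * logisticRisk z (w k) ≤ 1) :
    γ ^ 2 * (∑ k ∈ Finset.range (t + 1), η k) * logisticRisk z (w (t + 1)) ≤
      2 + log (γ ^ 2 * ∑ k ∈ Finset.range (t + 1), η k) ^ 2 := by
  have hbound := sum_mul_logisticRisk_le hz hupdate hη hstable
  simp only [hw0, zero_sub, norm_neg] at hbound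
  set A := ∑ k ∈ Finset.range (t + 1), η k
  set S := γ ^ 2 * A
  have hA : 0 ≤ A := Finset.sum_nonneg fun k hk ↦ hη k (Nat.lt_succ_iff.mp (Finset.mem_range.mp hk))
  rcases lt_or_ge S 1 with hS | hS
  · have hL0 : logisticRisk z 0 ≤ log 2 :=
      (logisticRisk_le_logLoss (r := 0) (by simp)).trans_eq (by norm_num [logLoss])
    have hA0 : A * logisticRisk z (w (t + 1)) ≤ A * (2 * log 2) :=
      calc A * logisticRisk z (w (t + 1)) ≤ ‖(0 : E)‖ ^ 2 + 2 * A * logisticRisk z 0 := hbound 0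
        _ = A * (2 * logisticRisk z 0) := by rw [norm_zero]; ring
        _ ≤ A * (2 * log 2) := by gcongr
    calc S * logisticRisk z (w (t + 1)) = γ ^ 2 * (A * logisticRisk z (w (t + 1))) := by ring
      _ ≤ γ ^ 2 * (A * (2 * log 2)) := by gcongr
      _ = S * (2 * log 2) := by ring
      _ ≤ 2 * log 2 := mul_le_of_le_one_left (by positivity) hS.le
      _ ≤ 2 + log S ^ 2 := by nlinarith [log_two_lt_d9, sq_nonneg (log S)]
  · set r := log S
    have hr : 0 ≤ r := log_nonneg hS
    have hS0 : 0 < S := by linarith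
    set u := (r / γ) • wstar
    have hu : ‖u‖ ^ 2 ≤ (r / γ) ^ 2 := by
      rw [norm_smul, mul_pow, Real.norm_eq_abs, sq_abs]
      exact mul_le_of_le_one_right (sq_nonneg _) (pow_le_one₀ (norm_nonneg _) hwstar)
    have hLu : logisticRisk z u ≤ S⁻¹ := by
      refine (logisticRisk_le_logLoss (r := r) fun i ↦ ?_).trans ?_
      · rw [real_inner_smul_right]
        calc r = r / γ * γ := by field_simp
          _ ≤ r / γ * ⟪z i, wstar⟫ := mul_le_mul_of_nonneg_left (hmargin i) (div_nonneg hr hγ.le)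
      · exact (logLoss_le_exp_neg r).trans_eq (by rw [exp_neg, exp_log hS0])
    calc S * logisticRisk z (w (t + 1)) = γ ^ 2 * (A * logisticRisk z (w (t + 1))) := by ring
      _ ≤ γ ^ 2 * ((r / γ) ^ 2 + 2 * A * S⁻¹) := by
        gcongr
        exact (hbound u).trans (by gcongr)
      _ = r ^ 2 + 2 := by
        have hA0 : A ≠ 0 := by rintro h; simp [S, h] at hS0
        simp only [S]
        field_simp
      _ = 2 + r ^ 2 := add_comm _ _

theorem stepSize_pos {γ : ℝ} (hγ : γ ≠ 0) {S : ℕ → ℝ}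
    (hS : ∀ t, S t = γ ^ 2 * ∑ k ∈ Finset.range (t + 1), η k) (hη0 : η 0 = 1 / log 2)
    (hηrec : ∀ t, η (t + 1) = S t / (2 * max 2 (log (S t) ^ 2))) (t : ℕ) : 0 < η t := by
  induction t using Nat.strong_induction_on with
  | _ t ih =>
    cases t with
    | zero => rw [hη0]; exact one_div_pos.2 (log_pos one_lt_two)
    | succ t =>
      rw [hηrec, hS]
      refine div_pos (mul_pos (by positivity) (Finset.sum_pos (fun k hk ↦ ih k ?_) ?_)) ?_
      · exact Nat.lt_succ_iff.mpr (Nat.lt_succ_iff.mp (Finset.mem_range.mp hk))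
      · exact Finset.nonempty_range_add_one
      · positivity

theorem logisticRisk_le_inv_stepSize (hz : ∀ i, ‖z i‖ ≤ 1)
    {wstar : E} (hwstar : ‖wstar‖ ≤ 1) {γ : ℝ} (hγ : 0 < γ) (hmargin : ∀ i, γ ≤ ⟪z i, wstar⟫)
    {S : ℕ → ℝ} (hS : ∀ t, S t = γ ^ 2 * ∑ k ∈ Finset.range (t + 1), η k)
    (hη0 : η 0 = 1 / log 2) (hηrec : ∀ t, η (t + 1) = S t / (2 * max 2 (log (S t) ^ 2)))
    (hw0 : w 0 = 0) (hupdate : ∀ t, w (t + 1) = w t - η t • logisticRiskGrad z (w t)) (t : ℕ) :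
    logisticRisk z (w t) ≤ 1 / η t := by
  have hpos := stepSize_pos hγ.ne' hS hη0 hηrec
  induction t using Nat.strong_induction_on with
  | _ t ih =>
    cases t with
    | zero =>
      rw [hw0, hη0, one_div_one_div]
      exact (logisticRisk_le_logLoss (r := 0) (by simp)).trans_eq (by norm_num [logLoss])
    | succ t =>
      have hstable : ∀ k ≤ t, η k * logisticRisk z (w k) ≤ 1 := fun k hk ↦
        (le_div_iff₀' (hpos k)).1 (ih k (Nat.lt_succ_of_le hk))
      have key := mul_logisticRisk_le_two_add_log_sq hz hupdate hw0 hwstar hγ hmargin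
        (fun k _ ↦ (hpos k).le) hstable
      rw [← hS] at key
      have hS0 : 0 < S t := by
        have := hpos (t + 1)
        rw [hηrec] at this
        exact (div_pos_iff_of_pos_right (by positivity)).1 this
      rw [hηrec, one_div_div, le_div_iff₀ hS0]
      linarith [le_max_left 2 (log (S t) ^ 2), le_max_right 2 (log (S t) ^ 2)]

end LogisticRegression

/-- Gradient descent on separable logistic regression initialized at `w₀ = 0` with the
schedule `η₀ = 1/ln 2`, `η_t = S_{t-1}/(2 max{2F(w₀), ln²(S_{t-1})})` for `t ≥ 1`,
where `S_t = γ² ∑_{k≤t} η_k` and `F(w₀) = (1/n)∑ᵢ exp(−yᵢ⟨xᵢ,w₀⟩)`, satisfies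
`L(w_t) ≤ 1/η_t` for all `t`, and consequently the loss is monotonically non-increasing. -/
theorem stmt_17 {d n : ℕ} (hn : 1 ≤ n) (x : Fin n → EuclideanSpace ℝ (Fin d))
    (y : Fin n → ℝ) (hy : ∀ i, y i = 1 ∨ y i = -1) (hx : ∀ i, ‖x i‖ ≤ 1)
    (wstar : EuclideanSpace ℝ (Fin d)) (hwstar : ‖wstar‖ = 1)
    (γ : ℝ) (hγ : 0 < γ) (hmargin : ∀ i, γ ≤ y i * ⟪x i, wstar⟫)
    (L : EuclideanSpace ℝ (Fin d) → ℝ)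
    (hL : L = fun w => (1 / (n : ℝ)) * ∑ i, Real.log (1 + Real.exp (-(y i * ⟪x i, w⟫))))
    (gradL : EuclideanSpace ℝ (Fin d) → EuclideanSpace ℝ (Fin d))
    (hgrad : gradL = fun w =>
      (1 / (n : ℝ)) • ∑ i, (-(y i) / (1 + Real.exp (y i * ⟪x i, w⟫))) • x i)
    (F0 : ℝ) (hF0 : F0 = (1 / (n : ℝ)) * ∑ i, Real.exp (-(y i * ⟪x i, (0 : EuclideanSpace ℝ (Fin d))⟫)))
    (η : ℕ → ℝ) (S : ℕ → ℝ)
    (hS : ∀ t, S t = γ ^ 2 * ∑ k ∈ Finset.range (t + 1), η k)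
    (hη0 : η 0 = 1 / Real.log 2)
    (hηrec : ∀ t, η (t + 1) = S t / (2 * max (2 * F0) ((Real.log (S t)) ^ 2)))
    (w : ℕ → EuclideanSpace ℝ (Fin d)) (hw0 : w 0 = 0)
    (hupdate : ∀ t, w (t + 1) = w t - η t • gradL (w t)) :
    (∀ t, L (w t) ≤ 1 / η t) ∧ (∀ t, L (w (t + 1)) ≤ L (w t)) := by
  set z : Fin n → EuclideanSpace ℝ (Fin d) := fun i ↦ y i • x i
  have hz : ∀ i, ‖z i‖ ≤ 1 := fun i ↦ by
    rcases hy i with h | h <;> simp [z, h, hx i]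
  have hLz : L = logisticRisk z := by
    funext v
    simp only [hL, logisticRisk, logLoss, z, real_inner_smul_left, Fintype.card_fin, one_div]
  have hgradz : gradL = logisticRiskGrad z := by
    funext v
    simp only [hgrad, logisticRiskGrad, logLossDeriv, z, real_inner_smul_left, smul_smul,
      Fintype.card_fin, one_div]
    congr 1
    exact Finset.sum_congr rfl fun i _ ↦ by congr 1; ring
  have hF1 : F0 = 1 := by
    simp only [hF0, inner_zero_right, mul_zero, neg_zero, Real.exp_zero, Finset.sum_const,
      Finset.card_univ, Fintype.card_fin, nsmul_eq_mul, mul_one, one_div]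
    exact inv_mul_cancel₀ (Nat.cast_ne_zero.2 (by omega))
  have hz_margin : ∀ i, γ ≤ ⟪z i, wstar⟫ := fun i ↦ by
    simpa [z, real_inner_smul_left] using hmargin i
  rw [hF1, mul_one] at hηrec
  subst hLz hgradz
  have hpos := stepSize_pos hγ.ne' hS hη0 hηrec
  have hbound := logisticRisk_le_inv_stepSize hz hwstar.le hγ hz_margin hS hη0 hηrec hw0 hupdate
  refine ⟨hbound, fun t ↦ ?_⟩
  rw [hupdate]
  exact logisticRisk_sub_smul_grad_le_self hz _ (hpos t).le ((le_div_iff₀' (hpos t)).1 (hbound t))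
end
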